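/- Let S be a numerical semigroup with multiplicity m. Define the Apéry saturation operation: from the Apéry set elements {a_0, ..., a_{m-1}} of S with respect to m (taking the representative m in the zero class), form the semigroup Ŝ generated by S together with all elements a_k - m for which there exist a_i, a_j in the Apéry set with a_i + a_j = a_k. Then the iterated sequence S^1 = S, S^{n+1} = Ŝ^n becomes stationary, and the stationary value equals the MED closure MED(S). -/

import Mathlib

/-- A numerical semigroup: an additive submonoid of ℕ with finite complement. -/
structure NumSgp where
  carrier : Set ℕ
  zero_mem : 0 ∈ carrier
  add_mem : ∀ ⦃a b : ℕ⦄, a ∈ carrier → b ∈ carrier → a + b ∈ carrier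
  cofinite : carrierᶜ.Finite

/-- The multiplicity: the smallest nonzero element. -/
noncomputable def NumSgp.mult (S : NumSgp) : ℕ := sInf {n | n ∈ S.carrier ∧ n ≠ 0}

/-- The Apéry set of `S` with respect to `s`: elements `x ∈ S` with `x - s ∉ S`
(over the integers, i.e. there is no `y ∈ S` with `y + s = x`). -/
def NumSgp.Ap (S : NumSgp) (s : ℕ) : Set ℕ :=
  {x | x ∈ S.carrier ∧ ∀ y ∈ S.carrier, y + s ≠ x}

/-- `z` is an Arf element of `S`. -/
def NumSgp.ArfElem (S : NumSgp) (z : ℕ) : Prop :=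
  ∀ x ∈ S.carrier, ∀ y ∈ S.carrier, z ≤ x → z ≤ y → x + y - z ∈ S.carrier

/-- The minimal generating set: nonzero elements not expressible as a sum of two
nonzero elements of `S`. -/
def NumSgp.minGen (S : NumSgp) : Set ℕ :=
  {x | x ∈ S.carrier ∧ x ≠ 0 ∧ ∀ a ∈ S.carrier, ∀ b ∈ S.carrier, a ≠ 0 → b ≠ 0 → a + b ≠ x}

/-- The embedding dimension: the cardinality of the minimal generating set. -/
noncomputable def NumSgp.edim (S : NumSgp) : ℕ := S.minGen.ncard

/-- The Frobenius number: the largest gap. -/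
noncomputable def NumSgp.frob (S : NumSgp) : ℕ := sSup S.carrierᶜ

/-- The conductor: the smallest `c` with `c + ℤ≥0 ⊆ S`. -/
noncomputable def NumSgp.cond (S : NumSgp) : ℕ := sInf {c | ∀ n, c ≤ n → n ∈ S.carrier}

/-- The genus: the number of gaps. -/
noncomputable def NumSgp.genus (S : NumSgp) : ℕ := S.carrierᶜ.ncard

/-- The set of pseudo-Frobenius numbers. -/
def NumSgp.PF (S : NumSgp) : Set ℕ :=
  {x | x ∉ S.carrier ∧ ∀ s ∈ S.carrier, s ≠ 0 → x + s ∈ S.carrier}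

/-- The type of `S`: the number of pseudo-Frobenius numbers. -/
noncomputable def NumSgp.type (S : NumSgp) : ℕ := S.PF.ncard

/-- `S` is a MED semigroup: its multiplicity is an Arf element, i.e. for all
`x, y ∈ S` with `x, y ≥ m(S)`, `x + y - m(S) ∈ S`. -/
def NumSgp.IsMED (S : NumSgp) : Prop := S.ArfElem S.mult

/-- The MED closure of `S`: the intersection of all MED numerical semigroups
containing `S` with the same multiplicity. -/
def NumSgp.MEDclosure (S : NumSgp) : Set ℕ :=
  ⋂ T ∈ {T : NumSgp | S.carrier ⊆ T.carrier ∧ T.mult = S.mult ∧ T.IsMED}, T.carrier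

/-- Multiplicity of a set of naturals. -/
noncomputable def multS (A : Set ℕ) : ℕ := sInf {n | n ∈ A ∧ n ≠ 0}

/-- The modified Apéry set `Âp(A, s)`: elements `x ∈ A` with `x - s` a gap of `A` or zero. -/
def hAp (A : Set ℕ) (s : ℕ) : Set ℕ :=
  {x | x ∈ A ∧ ∃ d : ℕ, x = s + d ∧ (d ∉ A ∨ d = 0)}

/-- The Apéry saturation of `A`: the submonoid generated by `A` together with all
`a_k - m` for triples `a_i + a_j = a_k` of elements of `Âp(A, m)`, `m = m(A)`. -/
def ApSat (A : Set ℕ) : Set ℕ :=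
  ↑(AddSubmonoid.closure (A ∪ {x : ℕ | ∃ ai ∈ hAp A (multS A), ∃ aj ∈ hAp A (multS A),
      ∃ ak ∈ hAp A (multS A), ai + aj = ak ∧ x + multS A = ak}))

/-- The iterated Apéry saturation sequence. -/
def apSatSeq (A : Set ℕ) : ℕ → Set ℕ
  | 0 => A
  | n + 1 => ApSat (apSatSeq A n)

/-! Saturation only adds elements `ai + aj - m` with `ai, aj ∈ Âp(A, m)`, which every MED
semigroup of multiplicity `m` containing `A` already contains, and it does not change the
multiplicity; so every term of the sequence lies in `MED(S)`. The terms increase and all contain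
`S`, which has finitely many gaps, so the sequence becomes stationary. A stationary term `L` is
MED: write `x = ai + k m`, `y = aj + l m` with `ai, aj ∈ Âp(L, m)`; then `ai + aj - m ∈ L`, since
otherwise `ai + aj ∈ Âp(L, m)` and saturation would add `ai + aj - m`. -/

open Function Set

theorem exists_isFixedPt_iterate_of_finite_compl {α : Type*} {F : Set α → Set α}
    (hF : id ≤ F) {A : Set α} (hA : Aᶜ.Finite) : ∃ l, IsFixedPt F (F^[l] A) := by
  by_contra! hne
  have hfin : ∀ n, (F^[n] A)ᶜ.Finite := fun n =>
    hA.subset (compl_subset_compl.2 (id_le_iterate_of_id_le hF n A))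
  refine not_strictAnti_of_wellFoundedLT (fun n => (F^[n] A)ᶜ.ncard)
    (strictAnti_nat_of_succ_lt fun n => ncard_lt_ncard ?_ (hfin n))
  rw [iterate_succ_apply']
  exact (compl_subset_compl.2 (hF _)).ssubset_of_ne (compl_injective.ne (hne n))

theorem apSatSeq_eq_iterate (A : Set ℕ) (n : ℕ) : apSatSeq A n = ApSat^[n] A := by
  induction n with
  | zero => rfl
  | succ n ih => rw [iterate_succ_apply', ← ih]; rfl

theorem subset_apSat (A : Set ℕ) : A ⊆ ApSat A :=
  fun _ hx => AddSubmonoid.subset_closure (Or.inl hx)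

theorem le_of_mem_hAp {A : Set ℕ} {s x : ℕ} (hx : x ∈ hAp A s) : s ≤ x := by
  obtain ⟨-, d, rfl, -⟩ := hx
  exact Nat.le_add_right s d

theorem apSat_subset {A : Set ℕ} {T : AddSubmonoid ℕ} (hA : A ⊆ T)
    (hT : ∀ ai ∈ hAp A (multS A), ∀ aj ∈ hAp A (multS A), ai + aj - multS A ∈ T) :
    ApSat A ⊆ T := by
  refine AddSubmonoid.closure_le.2 (union_subset hA ?_)
  rintro x ⟨ai, hai, aj, haj, ak, -, rfl, hx⟩
  rw [show x = ai + aj - multS A by omega]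
  exact hT ai hai aj haj

def ordinarySubmonoid (m : ℕ) : AddSubmonoid ℕ where
  carrier := {x | x = 0 ∨ m ≤ x}
  zero_mem' := Or.inl rfl
  add_mem' {a b} ha hb := by
    change a = 0 ∨ m ≤ a at ha
    change b = 0 ∨ m ≤ b at hb
    change a + b = 0 ∨ m ≤ a + b
    omega

namespace NumSgp

variable (S : NumSgp)

def toAddSubmonoid : AddSubmonoid ℕ where
  carrier := S.carrier
  zero_mem' := S.zero_mem
  add_mem' := fun ha hb => S.add_mem ha hb

theorem multS_carrier : multS S.carrier = S.mult := rfl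

theorem exists_mem_ne_zero : ∃ x ∈ S.carrier, x ≠ 0 := by
  obtain ⟨x, hx, hx0⟩ := (S.cofinite.infinite_compl.mono (compl_compl _).le).exists_gt 0
  exact ⟨x, hx, hx0.ne'⟩

theorem mult_mem : S.mult ∈ S.carrier :=
  (Nat.sInf_mem (s := {n | n ∈ S.carrier ∧ n ≠ 0}) S.exists_mem_ne_zero).1

theorem mult_ne_zero : S.mult ≠ 0 :=
  (Nat.sInf_mem (s := {n | n ∈ S.carrier ∧ n ≠ 0}) S.exists_mem_ne_zero).2

theorem mult_le {x : ℕ} (hx : x ∈ S.carrier) (hx0 : x ≠ 0) : S.mult ≤ x :=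
  Nat.sInf_le ⟨hx, hx0⟩

theorem mul_mult_mem (k : ℕ) : k * S.mult ∈ S.carrier :=
  S.toAddSubmonoid.nsmul_mem S.mult_mem k

def apSat : NumSgp where
  carrier := ApSat S.carrier
  zero_mem := AddSubmonoid.zero_mem _
  add_mem := fun _ _ ha hb => AddSubmonoid.add_mem _ ha hb
  cofinite := S.cofinite.subset (compl_subset_compl.2 (subset_apSat _))

theorem carrier_iterate_apSat (n : ℕ) : (apSat^[n] S).carrier = ApSat^[n] S.carrier := by
  induction n with
  | zero => rfl
  | succ n ih => rw [iterate_succ_apply', iterate_succ_apply', ← ih]; rfl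

theorem mult_apSat : S.apSat.mult = S.mult := by
  refine le_antisymm (S.apSat.mult_le (subset_apSat _ S.mult_mem) S.mult_ne_zero) ?_
  have hle : ApSat S.carrier ⊆ ordinarySubmonoid S.mult := by
    refine apSat_subset (fun x hx => or_iff_not_imp_left.2 (S.mult_le hx)) ?_
    simp only [multS_carrier]
    intro ai hai aj haj
    have := le_of_mem_hAp hai
    have := le_of_mem_hAp haj
    exact Or.inr (by omega)
  exact (hle S.apSat.mult_mem).resolve_left S.apSat.mult_ne_zero

variable {S}

theorem apSat_subset_of_isMED {T : NumSgp} (hST : S.carrier ⊆ T.carrier)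
    (hmult : T.mult = S.mult) (hT : T.IsMED) : S.apSat.carrier ⊆ T.carrier := by
  refine apSat_subset (T := T.toAddSubmonoid) hST ?_
  simp only [multS_carrier]
  intro ai hai aj haj
  have := hT ai (hST hai.1) aj (hST haj.1) (hmult.trans_le (le_of_mem_hAp hai))
    (hmult.trans_le (le_of_mem_hAp haj))
  rwa [hmult] at this

theorem exists_mem_hAp_add_mul {x : ℕ} (hx : x ∈ S.carrier) (hmx : S.mult ≤ x) :
    ∃ a ∈ hAp S.carrier S.mult, ∃ k, x = a + k * S.mult := by
  induction x using Nat.strong_induction_on with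
  | _ x ih =>
    by_cases hxAp : x ∈ hAp S.carrier S.mult
    · exact ⟨x, hxAp, 0, by simp⟩
    obtain ⟨hd, hd0⟩ : x - S.mult ∈ S.carrier ∧ x - S.mult ≠ 0 := by
      by_contra! h
      exact hxAp ⟨hx, x - S.mult, by omega, not_or_of_imp h⟩
    have hm0 := S.mult_ne_zero
    obtain ⟨a, ha, k, hk⟩ := ih (x - S.mult) (by omega) hd (S.mult_le hd hd0)
    exact ⟨a, ha, k + 1, by rw [add_mul, one_mul]; omega⟩

theorem isMED_of_apSat_eq (hS : S.apSat.carrier = S.carrier) : S.IsMED := by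
  intro x hx y hy hmx hmy
  obtain ⟨ai, hai, k, rfl⟩ := exists_mem_hAp_add_mul hx hmx
  obtain ⟨aj, haj, l, rfl⟩ := exists_mem_hAp_add_mul hy hmy
  have hmi := le_of_mem_hAp hai
  have hmj := le_of_mem_hAp haj
  have hsum : ai + aj - S.mult ∈ S.carrier := by
    by_contra hgap
    have hsumAp : ai + aj ∈ hAp S.carrier S.mult :=
      ⟨S.add_mem hai.1 haj.1, ai + aj - S.mult, by omega, Or.inl hgap⟩
    refine hgap (hS ▸ AddSubmonoid.subset_closure
      (Or.inr ⟨ai, hai, aj, haj, ai + aj, hsumAp, rfl, ?_⟩))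
    rw [multS_carrier]
    omega
  have heq : ai + k * S.mult + (aj + l * S.mult) - S.mult
      = (ai + aj - S.mult) + (k + l) * S.mult := by
    rw [add_mul]; omega
  rw [heq]
  exact S.add_mem hsum (S.mul_mult_mem _)

theorem mult_iterate_apSat (n : ℕ) : (apSat^[n] S).mult = S.mult := by
  induction n with
  | zero => rfl
  | succ n ih => rw [iterate_succ_apply', mult_apSat, ih]

theorem subset_iterate_apSat (n : ℕ) : S.carrier ⊆ (apSat^[n] S).carrier := by
  rw [carrier_iterate_apSat]
  exact id_le_iterate_of_id_le subset_apSat n _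

theorem iterate_apSat_subset_of_isMED {T : NumSgp} (hST : S.carrier ⊆ T.carrier)
    (hmult : T.mult = S.mult) (hT : T.IsMED) (n : ℕ) :
    (apSat^[n] S).carrier ⊆ T.carrier := by
  induction n with
  | zero => exact hST
  | succ n ih =>
    rw [iterate_succ_apply']
    exact apSat_subset_of_isMED ih (hmult.trans (mult_iterate_apSat n).symm) hT

end NumSgp

theorem apery_saturation_reaches_med_closure (S : NumSgp) :
    ∃ l : ℕ, (∀ n, l ≤ n → apSatSeq S.carrier n = apSatSeq S.carrier l) ∧
      apSatSeq S.carrier l = S.MEDclosure := by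
  obtain ⟨l, hl⟩ := exists_isFixedPt_iterate_of_finite_compl subset_apSat S.cofinite
  refine ⟨l, fun n hn => ?_, ?_⟩
  · rw [apSatSeq_eq_iterate, apSatSeq_eq_iterate, ← Nat.sub_add_cancel hn, iterate_add_apply,
      iterate_fixed hl]
  rw [← NumSgp.carrier_iterate_apSat] at hl
  rw [apSatSeq_eq_iterate, ← NumSgp.carrier_iterate_apSat]
  refine Subset.antisymm (subset_iInter₂ fun T hT => ?_) (biInter_subset_of_mem ?_)
  · exact NumSgp.iterate_apSat_subset_of_isMED hT.1 hT.2.1 hT.2.2 l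
  · exact ⟨NumSgp.subset_iterate_apSat l, NumSgp.mult_iterate_apSat l,
      NumSgp.isMED_of_apSat_eq hl⟩
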